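/- arXiv:2111.13329 — 2 statements merged into one kernel-verified Lean document; each statement's English description precedes it below -/
import Mathlib

section
/- Let α > 0, β̃ > 0, and u ∈ ℝ. Define f : (0,∞) → ℝ by f(θ) = θ/α − β̃·log(θ/α) + u²/(2θ). Then θ* = α·(β̃/2 + √(β̃²/4 + u²/(2α))) is the unique global minimizer of f on (0,∞). -/
/-!
The function is strictly convex on `(0, ∞)`: `θ / α` is linear, `u² / (2θ)` is convex and
`-β̃ log (θ / α)` is strictly convex because `β̃ > 0`. Its derivative is
`(θ² - α β̃ θ - α u² / 2) / (α θ²)`, and `θ*` is the positive root of the numerator. A strictly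
convex function lies strictly above its value at a critical point everywhere else.
-/

open Real Set

lemma StrictConcaveOn.const_mul {s : Set ℝ} {f : ℝ → ℝ} {c : ℝ} (hc : 0 < c)
    (hf : StrictConcaveOn ℝ s f) : StrictConcaveOn ℝ s fun x => c * f x :=
  ⟨hf.1, fun x hx y hy hxy a b ha hb hab => by
    simpa only [smul_eq_mul, mul_add, mul_left_comm c] using
      mul_lt_mul_of_pos_left (hf.2 hx hy hxy ha hb hab) hc⟩

lemma StrictConvexOn.lt_of_hasDerivAt_eq_zero {S : Set ℝ} {f : ℝ → ℝ} {x y : ℝ}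
    (hf : StrictConvexOn ℝ S f) (hx : x ∈ S) (hy : y ∈ S) (hyx : y ≠ x)
    (hf₀ : HasDerivAt f 0 x) : f x < f y := by
  rcases hyx.lt_or_gt with h | h
  · exact (slope_neg_iff_of_le h.le).1 (hf.slope_lt_of_hasDerivAt hy hx h hf₀)
  · exact (slope_pos_iff_of_le h.le).1 (hf.lt_slope_of_hasDerivAt hx hy h hf₀)

noncomputable def iasObjective (α β u θ : ℝ) : ℝ :=
  θ / α - β * log (θ / α) + u ^ 2 / (2 * θ)

variable {α β u : ℝ}

lemma strictConvexOn_iasObjective (hα : 0 < α) (hβ : 0 < β) :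
    StrictConvexOn ℝ (Ioi 0) (iasObjective α β u) := by
  have hlin : ConvexOn ℝ (Ioi 0) fun θ : ℝ => θ / α :=
    ((convexOn_id (convex_Ioi 0)).smul (inv_nonneg.2 hα.le)).congr fun θ _ => by
      simp [div_eq_inv_mul]
  have hinv : ConvexOn ℝ (Ioi 0) fun θ : ℝ => u ^ 2 / (2 * θ) := by
    have := (convexOn_zpow (𝕜 := ℝ) (-1)).smul (c := u ^ 2 / 2) (by positivity)
    refine this.congr fun θ _ => ?_
    simp only [smul_eq_mul, zpow_neg_one]
    field_simp
  have hlog : StrictConcaveOn ℝ (Ioi 0) fun θ : ℝ => β * log (θ / α) := by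
    refine (strictConcaveOn_log_Ioi.add_const (-log α)).const_mul hβ |>.congr fun θ hθ => ?_
    simp only [Pi.add_apply, log_div (mem_Ioi.1 hθ).ne' hα.ne', sub_eq_add_neg]
  exact (hlin.sub_strictConcaveOn hlog).add_convexOn hinv

lemma hasDerivAt_iasObjective (hα : α ≠ 0) {θ : ℝ} (hθ : θ ≠ 0) :
    HasDerivAt (iasObjective α β u) (1 / α - β / θ - u ^ 2 / (2 * θ ^ 2)) θ := by
  have hlin : HasDerivAt (fun θ : ℝ => θ / α) (1 / α) θ := by
    simpa using (hasDerivAt_id θ).div_const α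
  have hlog := (hlin.log (div_ne_zero hθ hα)).const_mul β
  have hinv : HasDerivAt (fun θ : ℝ => u ^ 2 / (2 * θ))
      ((0 * (2 * θ) - u ^ 2 * 2) / (2 * θ) ^ 2) θ :=
    (hasDerivAt_const θ (u ^ 2)).div (by simpa using (hasDerivAt_id θ).const_mul 2)
      (mul_ne_zero two_ne_zero hθ)
  refine ((hlin.sub hlog).add hinv).congr_deriv ?_
  field_simp
  ring

noncomputable def iasMinimizer (α β u : ℝ) : ℝ :=
  α * (β / 2 + √(β ^ 2 / 4 + u ^ 2 / (2 * α)))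

lemma iasMinimizer_pos (hα : 0 < α) (hβ : 0 < β) : 0 < iasMinimizer α β u := by
  unfold iasMinimizer
  positivity

lemma iasMinimizer_sq (hα : 0 < α) :
    iasMinimizer α β u ^ 2 = α * β * iasMinimizer α β u + α * u ^ 2 / 2 := by
  have hs := sq_sqrt (by positivity : 0 ≤ β ^ 2 / 4 + u ^ 2 / (2 * α))
  have hα' : α ^ 2 * (u ^ 2 / (2 * α)) = α * u ^ 2 / 2 := by
    field_simp
  unfold iasMinimizer
  linear_combination α ^ 2 * hs + hα'

lemma hasDerivAt_iasObjective_iasMinimizer (hα : 0 < α) (hβ : 0 < β) :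
    HasDerivAt (iasObjective α β u) 0 (iasMinimizer α β u) := by
  have hθ := iasMinimizer_pos hα hβ (u := u)
  refine (hasDerivAt_iasObjective hα.ne' hθ.ne').congr_deriv ?_
  field_simp
  linear_combination 2 * iasMinimizer_sq hα (β := β) (u := u)

theorem stmt_0 (α βt u : ℝ) (hα : 0 < α) (hβ : 0 < βt)
    (f : ℝ → ℝ)
    (hf : ∀ θ, f θ = θ / α - βt * Real.log (θ / α) + u ^ 2 / (2 * θ))
    (θstar : ℝ)
    (hθ : θstar = α * (βt / 2 + Real.sqrt (βt ^ 2 / 4 + u ^ 2 / (2 * α)))) :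
    0 < θstar ∧ ∀ θ, 0 < θ → θ ≠ θstar → f θstar < f θ := by
  obtain rfl : θstar = iasMinimizer α βt u := hθ
  obtain rfl : f = iasObjective α βt u := funext hf
  exact ⟨iasMinimizer_pos hα hβ, fun θ hθ hne =>
    (strictConvexOn_iasObjective hα hβ).lt_of_hasDerivAt_eq_zero (iasMinimizer_pos hα hβ) hθ hne
      (hasDerivAt_iasObjective_iasMinimizer hα hβ)⟩
end

section
/- Let J : ℝᵈ × (0,∞)ᵈ → ℝ be the energy J(u,θ) = (1/2)‖y−Au‖²_Γ + (1/2)Σᵢ uᵢ²/θᵢ + Σᵢ[θᵢ/αᵢ − β̃·log(θᵢ/αᵢ)] with β̃ > 0, αᵢ > 0, Γ positive definite. Then J is convex on ℝᵈ × (0,∞)ᵈ. -/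
/-!
Each of the three summands of `J` is convex on `{p | ∀ i, 0 < p.2 i}`: the data misfit is a
positive semidefinite quadratic form composed with an affine map, each `uᵢ² / θᵢ` is the
perspective of `u ↦ u²` composed with a linear projection, and each `θᵢ / αᵢ - β̃ log (θᵢ / αᵢ)`
is the convex function `s ↦ s - β̃ log s` (as `β̃ > 0`) evaluated at the linear function
`θᵢ / αᵢ`. Convexity is preserved by nonnegative combinations.
-/

open Matrix Set

lemma ConvexOn.finset_sum {𝕜 E β ι : Type*} [Semiring 𝕜] [PartialOrder 𝕜] [AddCommMonoid E]
    [AddCommMonoid β] [PartialOrder β] [IsOrderedAddMonoid β] [SMul 𝕜 E] [Module 𝕜 β]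
    {s : Set E} (hs : Convex 𝕜 s) (t : Finset ι) {f : ι → E → β}
    (hf : ∀ i ∈ t, ConvexOn 𝕜 s (f i)) : ConvexOn 𝕜 s fun x => ∑ i ∈ t, f i x := by
  classical
  induction t using Finset.induction_on with
  | empty => simpa using convexOn_const (0 : β) hs
  | insert i t hi ih =>
    simp only [Finset.sum_insert hi]
    exact (hf i (Finset.mem_insert_self i t)).add
      (ih fun j hj => hf j (Finset.mem_insert_of_mem hj))

lemma Matrix.PosSemidef.convexOn_dotProduct_mulVec {m : Type*} [Fintype m]
    {M : Matrix m m ℝ} (hM : M.PosSemidef) : ConvexOn ℝ univ fun v => v ⬝ᵥ M *ᵥ v := by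
  refine ⟨convex_univ, fun x _ z _ a b ha hb hab => ?_⟩
  have key : a * (x ⬝ᵥ M *ᵥ x) + b * (z ⬝ᵥ M *ᵥ z) - (a • x + b • z) ⬝ᵥ M *ᵥ (a • x + b • z)
      = a * b * ((x - z) ⬝ᵥ M *ᵥ (x - z)) := by
    obtain rfl : b = 1 - a := by linarith
    simp only [mulVec_add, mulVec_sub, mulVec_smul, dotProduct_add, dotProduct_sub,
      add_dotProduct, sub_dotProduct, dotProduct_smul, smul_dotProduct, smul_eq_mul]
    ring
  have hxz : 0 ≤ (x - z) ⬝ᵥ M *ᵥ (x - z) := by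
    simpa using hM.dotProduct_mulVec_nonneg (x - z)
  simp only [smul_eq_mul]
  nlinarith [mul_nonneg (mul_nonneg ha hb) hxz]

lemma convexOn_sq_div : ConvexOn ℝ {q : ℝ × ℝ | 0 < q.2} fun q => q.1 ^ 2 / q.2 := by
  refine ⟨(convex_Ioi 0).linear_preimage (LinearMap.snd ℝ ℝ ℝ),
    fun p (hp : 0 < p.2) q (hq : 0 < q.2) a b ha hb hab => ?_⟩
  have hpos : 0 < a * p.2 + b * q.2 := by
    have := convex_Ioi (0 : ℝ) hp hq ha hb hab
    simpa using this
  simp only [Prod.fst_add, Prod.snd_add, Prod.smul_fst, Prod.smul_snd, smul_eq_mul]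
  rw [div_le_iff₀ hpos]
  have hcomb : (a * (p.1 ^ 2 / p.2) + b * (q.1 ^ 2 / q.2)) * (a * p.2 + b * q.2)
      - (a * p.1 + b * q.1) ^ 2 = a * b * (p.1 * q.2 - q.1 * p.2) ^ 2 / (p.2 * q.2) := by
    obtain rfl : b = 1 - a := by linarith
    field_simp
    ring
  have : 0 ≤ a * b * (p.1 * q.2 - q.1 * p.2) ^ 2 / (p.2 * q.2) := by positivity
  linarith

lemma convexOn_sub_mul_log {c : ℝ} (hc : 0 ≤ c) :
    ConvexOn ℝ (Ioi 0) fun s => s - c * Real.log s :=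
  (convexOn_id (convex_Ioi 0)).sub (strictConcaveOn_log_Ioi.concaveOn.smul hc)

lemma convex_setOf_forall_pos {ι : Type*} : Convex ℝ {θ : ι → ℝ | ∀ i, 0 < θ i} :=
  fun θ hθ η hη a b ha hb hab i => by
    have := convex_Ioi (0 : ℝ) (hθ i) (hη i) ha hb hab
    simpa using this

lemma convexOn_sum_sq_div {ι : Type*} [Fintype ι] :
    ConvexOn ℝ {p : (ι → ℝ) × (ι → ℝ) | ∀ i, 0 < p.2 i} fun p => ∑ i, p.1 i ^ 2 / p.2 i := by
  have hS := convex_setOf_forall_pos.linear_preimage (LinearMap.snd ℝ (ι → ℝ) (ι → ℝ))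
  refine ConvexOn.finset_sum hS _ fun i _ => ?_
  let coord : (ι → ℝ) × (ι → ℝ) →ₗ[ℝ] ℝ × ℝ :=
    (LinearMap.proj i ∘ₗ LinearMap.fst ℝ _ _).prod (LinearMap.proj i ∘ₗ LinearMap.snd ℝ _ _)
  exact (convexOn_sq_div.comp_linearMap coord).subset (fun p hp => hp i) hS

lemma convexOn_sum_div_sub_mul_log {ι : Type*} [Fintype ι] {α : ι → ℝ} (hα : ∀ i, 0 < α i)
    {c : ℝ} (hc : 0 ≤ c) :
    ConvexOn ℝ {θ : ι → ℝ | ∀ i, 0 < θ i}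
      fun θ => ∑ i, (θ i / α i - c * Real.log (θ i / α i)) := by
  refine ConvexOn.finset_sum convex_setOf_forall_pos _ fun i _ => ?_
  let scaledCoord : (ι → ℝ) →ₗ[ℝ] ℝ := (α i)⁻¹ • LinearMap.proj i
  refine ((convexOn_sub_mul_log hc).comp_linearMap scaledCoord).subset
    (fun θ hθ => ?_) convex_setOf_forall_pos |>.congr fun θ _ => ?_
  · simpa [scaledCoord, div_eq_inv_mul] using div_pos (hθ i) (hα i)
  · simp [scaledCoord, div_eq_inv_mul]

theorem stmt_8 (n d : ℕ) (A : Matrix (Fin n) (Fin d) ℝ)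
    (Γ : Matrix (Fin n) (Fin n) ℝ) (hΓ : Γ.PosDef) (y : Fin n → ℝ)
    (α : Fin d → ℝ) (hα : ∀ i, 0 < α i) (βt : ℝ) (hβ : 0 < βt)
    (J : (Fin d → ℝ) × (Fin d → ℝ) → ℝ)
    (hJ : ∀ p, J p =
      (1 / 2) * ((y - A.mulVec p.1) ⬝ᵥ Γ⁻¹.mulVec (y - A.mulVec p.1)) +
      (1 / 2) * ∑ i, (p.1 i) ^ 2 / p.2 i +
      ∑ i, (p.2 i / α i - βt * Real.log (p.2 i / α i))) :
    ConvexOn ℝ {p : (Fin d → ℝ) × (Fin d → ℝ) | ∀ i, 0 < p.2 i} J := by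
  let θ : (Fin d → ℝ) × (Fin d → ℝ) →ₗ[ℝ] Fin d → ℝ := LinearMap.snd ℝ _ _
  have hS := convex_setOf_forall_pos.linear_preimage θ
  let residual : (Fin d → ℝ) × (Fin d → ℝ) →ᵃ[ℝ] Fin n → ℝ :=
    AffineMap.const ℝ _ y - (A.mulVecLin ∘ₗ LinearMap.fst ℝ _ _).toAffineMap
  have hmisfit := (hΓ.inv.posSemidef.convexOn_dotProduct_mulVec.comp_affineMap residual).subset
    (subset_univ _) hS
  have hprior := (convexOn_sum_div_sub_mul_log hα hβ.le).comp_linearMap θ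
  rw [funext hJ]
  exact ((hmisfit.smul (by norm_num)).add (convexOn_sum_sq_div.smul (by norm_num))).add hprior
end
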